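/- arXiv:math/9810061 — 6 statements merged into one kernel-verified Lean document; each statement's English description precedes it below -/
import Mathlib

section
/- If a sequence of analytic functions f_n converges to f locally uniformly on the disk D(0,R₁) and g_n converges to g locally uniformly on D(0,R₂), then the Hadamard products f_n * g_n (defined by multiplying Taylor coefficients at 0 termwise) converge to f * g locally uniformly on D(0, R₁R₂). -/
open Metric Set Filter

noncomputable def coeff (f : ℂ → ℂ) (k : ℕ) : ℂ := iteratedDeriv k f 0 / (k.factorial : ℂ)

noncomputable def hadamard (f g : ℂ → ℂ) : ℂ → ℂ := fun z => ∑' k : ℕ, coeff f k * coeff g k * z ^ k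

def Pt (x : ℂ) (f : ℂ → ℂ) : ℂ → ℂ := fun z => f (x * z)

def A0 : Set (ℂ → ℂ) := {f | AnalyticOnNhd ℂ f (ball (0:ℂ) 1) ∧ f 0 = 1}

def cm (V : Set (ℂ → ℂ)) : Set (ℂ → ℂ) := {h | ∃ f ∈ V, ∃ x : ℂ, ‖x‖ ≤ 1 ∧ h = Pt x f}

def dual (V : Set (ℂ → ℂ)) : Set (ℂ → ℂ) :=
  {g ∈ A0 | ∀ f ∈ V, ∀ z ∈ ball (0:ℂ) 1, hadamard f g z ≠ 0}

def eligible (g : ℂ → ℂ) : Prop := ∃ R > 1, AnalyticOnNhd ℂ g (ball (0:ℂ) R)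

def VT (V : Set (ℂ → ℂ)) : Set (ℂ → ℂ) :=
  {g | eligible g ∧ g 0 = 1 ∧ ∀ f ∈ V, hadamard f g 1 ≠ 0}

def perp (U : Set (ℂ → ℂ)) : Set (ℂ → ℂ) :=
  {h ∈ A0 | ∀ g ∈ U, hadamard g h 1 ≠ 0}

def lamSet (g : ℂ → ℂ) (V : Set (ℂ → ℂ)) : Set ℂ := (fun f => hadamard f g 1) '' V

def S (R : ℝ) : Set (Set ℂ) := {K | K ⊆ ball (0:ℂ) R ∧ IsCompact K}

noncomputable def closLU (R : ℝ) (U : Set (ℂ → ℂ)) : Set (ℂ → ℂ) :=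
  (UniformOnFun.toFun (S R)) '' closure ((UniformOnFun.ofFun (S R)) '' U)

/-!
Fix radii `r₁ < R₁`, `r₂ < R₂` with `K ⊆ D(0, q r₁ r₂)`, `q < 1`. If `f - fₙ` and `g - gₙ` are at
most `δ` on the circles of radii `r₁`, `r₂`, the Cauchy estimates bound their Taylor coefficients
by `δ / rᵢ ^ k`. Writing `ab - a'b' = (a - a')b + a'(b - b')` coefficientwise, the Hadamard series
of the difference is then dominated on `K` by a geometric series of ratio `q` and size `O(δ)`.
-/

open Topology

lemma DiffContOnCl.analyticAt_center {f : ℂ → ℂ} {c : ℂ} {r : ℝ}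
    (hf : DiffContOnCl ℂ f (ball c r)) (hr : 0 < r) : AnalyticAt ℂ f c :=
  hf.differentiableOn.analyticAt (ball_mem_nhds c hr)

lemma coeff_fun_sub {f g : ℂ → ℂ} (hf : AnalyticAt ℂ f 0) (hg : AnalyticAt ℂ g 0) (k : ℕ) :
    coeff (fun z => f z - g z) k = coeff f k - coeff g k := by
  simp only [coeff, iteratedDeriv_fun_sub hf.contDiffAt hg.contDiffAt, sub_div]

lemma norm_coeff_le_of_forall_mem_sphere_norm_le {f : ℂ → ℂ} {r C : ℝ} (hr : 0 < r)
    (hf : DiffContOnCl ℂ f (ball 0 r)) (hC : ∀ z ∈ sphere 0 r, ‖f z‖ ≤ C) (k : ℕ) :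
    ‖coeff f k‖ ≤ C / r ^ k := by
  have hk : (0 : ℝ) < k.factorial := by exact_mod_cast k.factorial_pos
  rw [coeff, norm_div, Complex.norm_natCast, div_le_iff₀ hk, div_mul_eq_mul_div, mul_comm C]
  exact Complex.norm_iteratedDeriv_le_of_forall_mem_sphere_norm_le k hr hf hC

section CoefficientSeries

variable {a b : ℕ → ℂ} {A B r₁ r₂ q : ℝ} {z : ℂ}

lemma norm_mul_mul_pow_le (hr₁ : 0 < r₁) (hr₂ : 0 < r₂) (ha : ∀ k, ‖a k‖ ≤ A / r₁ ^ k)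
    (hb : ∀ k, ‖b k‖ ≤ B / r₂ ^ k) (hz : ‖z‖ ≤ q * (r₁ * r₂)) (k : ℕ) :
    ‖a k * b k * z ^ k‖ ≤ A * B * q ^ k := by
  calc ‖a k * b k * z ^ k‖ = ‖a k‖ * ‖b k‖ * ‖z‖ ^ k := by rw [norm_mul, norm_mul, norm_pow]
    _ ≤ A / r₁ ^ k * (B / r₂ ^ k) * (q * (r₁ * r₂)) ^ k := by
      have hA : 0 ≤ A / r₁ ^ k := (norm_nonneg _).trans (ha k)
      have hB : 0 ≤ B / r₂ ^ k := (norm_nonneg _).trans (hb k)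
      gcongr
      exacts [ha k, hb k]
    _ = A * B * q ^ k := by
      rw [mul_pow, mul_pow]
      field_simp

lemma nonneg_of_norm_le_mul (hr₁ : 0 < r₁) (hr₂ : 0 < r₂) (hz : ‖z‖ ≤ q * (r₁ * r₂)) : 0 ≤ q :=
  nonneg_of_mul_nonneg_left ((norm_nonneg z).trans hz) (mul_pos hr₁ hr₂)

lemma summable_mul_mul_pow (hr₁ : 0 < r₁) (hr₂ : 0 < r₂) (hq : q < 1)
    (ha : ∀ k, ‖a k‖ ≤ A / r₁ ^ k) (hb : ∀ k, ‖b k‖ ≤ B / r₂ ^ k) (hz : ‖z‖ ≤ q * (r₁ * r₂)) :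
    Summable fun k => a k * b k * z ^ k :=
  .of_norm_bounded
    ((summable_geometric_of_lt_one (nonneg_of_norm_le_mul hr₁ hr₂ hz) hq).mul_left _)
    (norm_mul_mul_pow_le hr₁ hr₂ ha hb hz)

lemma norm_tsum_mul_mul_pow_le (hr₁ : 0 < r₁) (hr₂ : 0 < r₂) (hq : q < 1)
    (ha : ∀ k, ‖a k‖ ≤ A / r₁ ^ k) (hb : ∀ k, ‖b k‖ ≤ B / r₂ ^ k) (hz : ‖z‖ ≤ q * (r₁ * r₂)) :
    ‖∑' k, a k * b k * z ^ k‖ ≤ A * B / (1 - q) := by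
  have hq₀ := nonneg_of_norm_le_mul hr₁ hr₂ hz
  have hgeom := (summable_geometric_of_lt_one hq₀ hq).mul_left (A * B)
  calc ‖∑' k, a k * b k * z ^ k‖ ≤ ∑' k, A * B * q ^ k :=
        tsum_of_norm_bounded hgeom.hasSum (norm_mul_mul_pow_le hr₁ hr₂ ha hb hz)
    _ = A * B / (1 - q) := by rw [tsum_mul_left, tsum_geometric_of_lt_one hq₀ hq, div_eq_mul_inv]

end CoefficientSeries

lemma norm_hadamard_sub_hadamard_le {f f' g g' : ℂ → ℂ} {r₁ r₂ M₁ M₂ δ q : ℝ}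
    (hr₁ : 0 < r₁) (hr₂ : 0 < r₂) (hq : q < 1)
    (hf : DiffContOnCl ℂ f (ball 0 r₁)) (hf' : DiffContOnCl ℂ f' (ball 0 r₁))
    (hg : DiffContOnCl ℂ g (ball 0 r₂)) (hg' : DiffContOnCl ℂ g' (ball 0 r₂))
    (hf'M : ∀ w ∈ sphere 0 r₁, ‖f' w‖ ≤ M₁) (hgM : ∀ w ∈ sphere 0 r₂, ‖g w‖ ≤ M₂)
    (hff' : ∀ w ∈ sphere 0 r₁, ‖f w - f' w‖ ≤ δ) (hgg' : ∀ w ∈ sphere 0 r₂, ‖g w - g' w‖ ≤ δ)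
    {z : ℂ} (hz : ‖z‖ ≤ q * (r₁ * r₂)) :
    ‖hadamard f g z - hadamard f' g' z‖ ≤ (δ * M₂ + M₁ * δ) / (1 - q) := by
  have hda : ∀ k, ‖coeff f k - coeff f' k‖ ≤ δ / r₁ ^ k := fun k => by
    rw [← coeff_fun_sub (hf.analyticAt_center hr₁) (hf'.analyticAt_center hr₁)]
    exact norm_coeff_le_of_forall_mem_sphere_norm_le hr₁ (hf.sub hf') hff' k
  have hdb : ∀ k, ‖coeff g k - coeff g' k‖ ≤ δ / r₂ ^ k := fun k => by
    rw [← coeff_fun_sub (hg.analyticAt_center hr₂) (hg'.analyticAt_center hr₂)]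
    exact norm_coeff_le_of_forall_mem_sphere_norm_le hr₂ (hg.sub hg') hgg' k
  have ha' := norm_coeff_le_of_forall_mem_sphere_norm_le hr₁ hf' hf'M
  have hb := norm_coeff_le_of_forall_mem_sphere_norm_le hr₂ hg hgM
  have ha : ∀ k, ‖coeff f k‖ ≤ (M₁ + δ) / r₁ ^ k := fun k => by
    rw [add_div]
    exact (norm_le_norm_add_norm_sub' _ _).trans (add_le_add (ha' k) (hda k))
  have hb' : ∀ k, ‖coeff g' k‖ ≤ (M₂ + δ) / r₂ ^ k := fun k => by
    rw [add_div]
    exact (norm_le_norm_add_norm_sub _ _).trans (add_le_add (hb k) (hdb k))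
  have hsplit : hadamard f g z - hadamard f' g' z =
      (∑' k, (coeff f k - coeff f' k) * coeff g k * z ^ k) +
        ∑' k, coeff f' k * (coeff g k - coeff g' k) * z ^ k := by
    rw [hadamard, hadamard, ← (summable_mul_mul_pow hr₁ hr₂ hq ha hb hz).tsum_sub
      (summable_mul_mul_pow hr₁ hr₂ hq ha' hb' hz), ← Summable.tsum_add
      (summable_mul_mul_pow hr₁ hr₂ hq hda hb hz) (summable_mul_mul_pow hr₁ hr₂ hq ha' hdb hz)]
    exact tsum_congr fun k => by ring
  rw [hsplit, add_div]
  exact (norm_add_le _ _).trans (add_le_add (norm_tsum_mul_mul_pow_le hr₁ hr₂ hq hda hb hz)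
    (norm_tsum_mul_mul_pow_le hr₁ hr₂ hq ha' hdb hz))

lemma exists_pos_lt_lt_mul {ρ R₁ R₂ : ℝ} (hR₁ : 0 < R₁) (hR₂ : 0 < R₂) (h : ρ < R₁ * R₂) :
    ∃ r₁ r₂ : ℝ, 0 < r₁ ∧ 0 < r₂ ∧ r₁ < R₁ ∧ r₂ < R₂ ∧ ρ < r₁ * r₂ := by
  obtain ⟨r₁, hr₁, hr₁R⟩ := exists_between (max_lt hR₁ ((div_lt_iff₀ hR₂).2 h))
  have hr₁₀ : 0 < r₁ := (le_max_left _ _).trans_lt hr₁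
  have hρ : ρ < R₂ * r₁ := by
    rw [mul_comm]; exact (div_lt_iff₀ hR₂).1 ((le_max_right _ _).trans_lt hr₁)
  obtain ⟨r₂, hr₂, hr₂R⟩ := exists_between (max_lt hR₂ ((div_lt_iff₀ hr₁₀).2 hρ))
  refine ⟨r₁, r₂, hr₁₀, (le_max_left _ _).trans_lt hr₂, hr₁R, hr₂R, ?_⟩
  rw [mul_comm]
  exact (div_lt_iff₀ hr₁₀).1 ((le_max_right _ _).trans_lt hr₂)

lemma tendstoUniformlyOn_of_forall_pos_eventually_dist_le {ι α β : Type*} [PseudoMetricSpace β]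
    {F : ι → α → β} {f : α → β} {l : Filter ι} {s : Set α} {C : ℝ → ℝ}
    (hC : Tendsto C (𝓝[>] 0) (𝓝 0)) (h : ∀ δ > 0, ∀ᶠ n in l, ∀ x ∈ s, dist (f x) (F n x) ≤ C δ) :
    TendstoUniformlyOn F f l s := by
  rw [Metric.tendstoUniformlyOn_iff]
  intro ε hε
  obtain ⟨δ, hCδ, hδ⟩ := ((hC.eventually (gt_mem_nhds hε)).and self_mem_nhdsWithin).exists
  filter_upwards [h δ hδ] with n hn x hx using (hn x hx).trans_lt hCδ

lemma AnalyticOnNhd.diffContOnCl_ball {f : ℂ → ℂ} {c : ℂ} {r R : ℝ}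
    (hf : AnalyticOnNhd ℂ f (ball c R)) (hr : r < R) : DiffContOnCl ℂ f (ball c r) :=
  hf.differentiableOn.diffContOnCl_ball (closedBall_subset_ball hr)

lemma TendstoLocallyUniformlyOn.tendstoUniformlyOn_sphere {ι : Type*} {F : ι → ℂ → ℂ}
    {f : ℂ → ℂ} {l : Filter ι} {c : ℂ} {r R : ℝ}
    (h : TendstoLocallyUniformlyOn F f l (ball c R)) (hr : r < R) :
    TendstoUniformlyOn F f l (sphere c r) :=
  (tendstoLocallyUniformlyOn_iff_forall_isCompact isOpen_ball).1 h _
    (sphere_subset_closedBall.trans (closedBall_subset_ball hr)) (isCompact_sphere c r)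

theorem stmt0 (R₁ R₂ : ℝ) (hR₁ : 0 < R₁) (hR₂ : 0 < R₂)
    (f g : ℂ → ℂ) (fn gn : ℕ → ℂ → ℂ)
    (hfn : ∀ n, AnalyticOnNhd ℂ (fn n) (ball (0:ℂ) R₁))
    (hf : AnalyticOnNhd ℂ f (ball (0:ℂ) R₁))
    (hgn : ∀ n, AnalyticOnNhd ℂ (gn n) (ball (0:ℂ) R₂))
    (hg : AnalyticOnNhd ℂ g (ball (0:ℂ) R₂))
    (hcf : TendstoLocallyUniformlyOn fn f atTop (ball (0:ℂ) R₁))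
    (hcg : TendstoLocallyUniformlyOn gn g atTop (ball (0:ℂ) R₂)) :
    TendstoLocallyUniformlyOn (fun n => hadamard (fn n) (gn n)) (hadamard f g)
      atTop (ball (0:ℂ) (R₁ * R₂)) := by
  rw [tendstoLocallyUniformlyOn_iff_forall_isCompact isOpen_ball]
  intro K hK hKc
  obtain ⟨ρ, hρ, hKρ⟩ := exists_lt_subset_ball hKc.isClosed hK
  obtain ⟨r₁, r₂, hr₁, hr₂, hr₁R, hr₂R, hρr⟩ := exists_pos_lt_lt_mul hR₁ hR₂ hρ
  obtain ⟨q, hq, hzK⟩ : ∃ q < 1, ∀ z ∈ K, ‖z‖ ≤ q * (r₁ * r₂) :=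
    ⟨ρ / (r₁ * r₂), (div_lt_one (by positivity)).2 hρr, fun z hz => by
      rw [div_mul_cancel₀ _ (by positivity)]
      exact (mem_ball_zero_iff.1 (hKρ hz)).le⟩
  obtain ⟨M₁, hM₁⟩ := (isCompact_sphere (0 : ℂ) r₁).exists_bound_of_continuousOn
    ((hf.diffContOnCl_ball hr₁R).continuousOn_ball.mono sphere_subset_closedBall)
  obtain ⟨M₂, hM₂⟩ := (isCompact_sphere (0 : ℂ) r₂).exists_bound_of_continuousOn
    ((hg.diffContOnCl_ball hr₂R).continuousOn_ball.mono sphere_subset_closedBall)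
  refine tendstoUniformlyOn_of_forall_pos_eventually_dist_le
    (C := fun δ => (δ * M₂ + (M₁ + δ) * δ) / (1 - q)) ?_ fun δ hδ => ?_
  · exact tendsto_nhdsWithin_of_tendsto_nhds (by simpa using (by fun_prop :
      Continuous fun δ : ℝ => (δ * M₂ + (M₁ + δ) * δ) / (1 - q)).tendsto 0)
  filter_upwards [Metric.tendstoUniformlyOn_iff.1 (hcf.tendstoUniformlyOn_sphere hr₁R) δ hδ,
    Metric.tendstoUniformlyOn_iff.1 (hcg.tendstoUniformlyOn_sphere hr₂R) δ hδ]
    with n hfδ hgδ z hz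
  simp only [dist_eq_norm] at hfδ hgδ ⊢
  exact norm_hadamard_sub_hadamard_le hr₁ hr₂ hq (hf.diffContOnCl_ball hr₁R)
    ((hfn n).diffContOnCl_ball hr₁R) (hg.diffContOnCl_ball hr₂R) ((hgn n).diffContOnCl_ball hr₂R)
    (fun w hw => (norm_le_norm_add_norm_sub _ _).trans (add_le_add (hM₁ w hw) (hfδ w hw).le))
    hM₂ (fun w hw => (hfδ w hw).le) (fun w hw => (hgδ w hw).le) (hzK z hz)
end

section
/- If f is analytic on D(0,R₁) with Taylor coefficients a_k and g is analytic on D(0,R₂) with Taylor coefficients b_k, then the Hadamard product series Σ a_k b_k z^k converges and defines an analytic function on D(0, R₁R₂). -/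
/-!
By the Cauchy–Taylor expansion, the coefficient series of `f` has radius of convergence at least
`R₁`, and that of `g` at least `R₂`. If `‖aₖ‖ r₁ᵏ` and `‖bₖ‖ r₂ᵏ` are bounded then so is
`‖aₖ bₖ‖ (r₁ r₂)ᵏ`, so the Hadamard product series has radius at least `R₁ R₂`, and a power series
converges and is analytic inside its disc of convergence.
-/

open Metric Set Filter

namespace FormalMultilinearSeries

open scoped NNReal

variable {𝕜 : Type*} {E : Type*} [NontriviallyNormedField 𝕜] [NormedRing E] [NormOneClass E]
  [NormedAlgebra 𝕜 E]

theorem radius_mul_radius_le_radius_ofScalars_mul (a b : ℕ → 𝕜) :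
    (ofScalars E a).radius * (ofScalars E b).radius ≤ (ofScalars E (a * b)).radius := by
  refine ENNReal.mul_le_of_forall_lt fun r₁ hr₁ r₂ hr₂ => ?_
  lift r₁ to ℝ≥0 using hr₁.ne_top
  lift r₂ to ℝ≥0 using hr₂.ne_top
  obtain ⟨C₁, hC₁, ha⟩ := (ofScalars E a).norm_mul_pow_le_of_lt_radius hr₁
  obtain ⟨C₂, -, hb⟩ := (ofScalars E b).norm_mul_pow_le_of_lt_radius hr₂
  rw [← ENNReal.coe_mul]
  refine le_radius_of_bound _ (C₁ * C₂) fun n => ?_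
  specialize ha n
  specialize hb n
  rw [ofScalars_norm] at ha hb ⊢
  calc ‖(a * b) n‖ * ((r₁ * r₂ : ℝ≥0) : ℝ) ^ n
      = (‖a n‖ * (r₁ : ℝ) ^ n) * (‖b n‖ * (r₂ : ℝ) ^ n) := by
        rw [Pi.mul_apply, norm_mul, NNReal.coe_mul, mul_pow]; ring
    _ ≤ C₁ * C₂ := mul_le_mul ha hb (by positivity) hC₁.le

end FormalMultilinearSeries

theorem ofReal_le_radius_ofScalars_coeff {f : ℂ → ℂ} {R : ℝ}
    (hf : DifferentiableOn ℂ f (ball 0 R)) :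
    ENNReal.ofReal R ≤ (FormalMultilinearSeries.ofScalars ℂ (coeff f)).radius := by
  refine ENNReal.le_of_forall_pos_nnreal_lt fun r _ hr => ?_
  have hrR : ((r : ℝ) : ℂ) ∈ ball (0 : ℂ) R := by
    simpa using ENNReal.coe_lt_ofReal.1 hr
  have htaylor := (Complex.hasSum_taylorSeries_on_ball hf hrR).summable.norm
  refine FormalMultilinearSeries.le_radius_of_summable_norm _ (htaylor.congr fun n => ?_)
  simp only [FormalMultilinearSeries.ofScalars_norm, coeff, norm_smul, norm_div, norm_inv,
    norm_pow, sub_zero, Complex.norm_natCast, Complex.norm_real, NNReal.norm_eq]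
  ring

theorem stmt1_general (R₁ R₂ : ℝ) (hR₁ : 0 < R₁)
    (f g : ℂ → ℂ)
    (hf : AnalyticOnNhd ℂ f (ball (0:ℂ) R₁))
    (hg : AnalyticOnNhd ℂ g (ball (0:ℂ) R₂)) :
    (∀ z ∈ ball (0:ℂ) (R₁ * R₂), Summable (fun k : ℕ => coeff f k * coeff g k * z ^ k)) ∧
      AnalyticOnNhd ℂ (hadamard f g) (ball (0:ℂ) (R₁ * R₂)) := by
  set q := FormalMultilinearSeries.ofScalars ℂ (coeff f * coeff g)
  have hball : ball (0 : ℂ) (R₁ * R₂) ⊆ eball 0 q.radius := by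
    rw [← eball_ofReal]
    refine eball_subset_eball ?_
    calc ENNReal.ofReal (R₁ * R₂) = ENNReal.ofReal R₁ * ENNReal.ofReal R₂ :=
          ENNReal.ofReal_mul hR₁.le
      _ ≤ _ := mul_le_mul' (ofReal_le_radius_ofScalars_coeff hf.differentiableOn)
          (ofReal_le_radius_ofScalars_coeff hg.differentiableOn)
      _ ≤ q.radius := FormalMultilinearSeries.radius_mul_radius_le_radius_ofScalars_mul _ _
  have hsum : hadamard f g = q.sum :=
    funext fun z => (FormalMultilinearSeries.ofScalars_sum_eq (coeff f * coeff g) z).symm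
  exact ⟨fun z hz => (q.summable (hball hz)).congr fun n =>
      FormalMultilinearSeries.ofScalars_apply_eq _ z n,
    hsum ▸ q.analyticOnNhd.mono hball⟩

theorem stmt1 (R₁ R₂ : ℝ) (hR₁ : 0 < R₁) (hR₂ : 0 < R₂)
    (f g : ℂ → ℂ)
    (hf : AnalyticOnNhd ℂ f (ball (0:ℂ) R₁))
    (hg : AnalyticOnNhd ℂ g (ball (0:ℂ) R₂)) :
    (∀ z ∈ ball (0:ℂ) (R₁ * R₂), Summable (fun k : ℕ => coeff f k * coeff g k * z ^ k)) ∧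
      AnalyticOnNhd ℂ (hadamard f g) (ball (0:ℂ) (R₁ * R₂)) :=
  stmt1_general R₁ R₂ hR₁ f g hf hg
end

section
/- Let V be a compact subset (in the topology of locally uniform convergence) of the space of functions analytic on D(0,R₁), and let g be analytic on D(0,R₂). Then the set U = { f * g : f ∈ V } of Hadamard products is compact in the space of functions analytic on D(0, R₁R₂). -/
/-!
By Cauchy's estimates, `|a_k(f)| ≤ M_f / r₁^k` and `|a_k(g)| ≤ M_g / r₂^k`, where `M_f`, `M_g` bound
`f`, `g` on the circles of radii `r₁ < R₁`, `r₂ < R₂`; summing a geometric series gives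
`|(f * g)(z)| ≤ M_f M_g / (1 - |z| / (r₁ r₂))` for `|z| < r₁ r₂`. Every compact subset of
`D(0, R₁R₂)` lies in a disc `|z| ≤ ρ` with `ρ < r₁ r₂` for suitable such radii, so applying the bound
to `f₁ - f₂` shows that `f ↦ f * g` is continuous for locally uniform convergence; hence it maps the
compact set `V` onto a compact set.
-/

open Metric Set Filter

open scoped Topology

lemma coeff_sub {f₁ f₂ : ℂ → ℂ} (h₁ : AnalyticAt ℂ f₁ 0) (h₂ : AnalyticAt ℂ f₂ 0) (k : ℕ) :
    coeff (f₁ - f₂) k = coeff f₁ k - coeff f₂ k := by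
  rw [coeff, coeff, coeff, iteratedDeriv_sub h₁.contDiffAt h₂.contDiffAt, sub_div]

lemma norm_coeff_le {f : ℂ → ℂ} {r M : ℝ} (hr : 0 < r)
    (hf : DifferentiableOn ℂ f (closedBall 0 r)) (hM : ∀ z ∈ sphere (0:ℂ) r, ‖f z‖ ≤ M) (k : ℕ) :
    ‖coeff f k‖ ≤ M / r ^ k := by
  have hk : (0 : ℝ) < k.factorial := mod_cast k.factorial_pos
  have := Complex.norm_iteratedDeriv_le_of_forall_mem_sphere_norm_le k hr
    (hf.diffContOnCl_ball subset_rfl) hM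
  rw [coeff, norm_div, Complex.norm_natCast, div_le_iff₀ hk]
  exact this.trans_eq (by ring)

lemma nonneg_of_forall_mem_sphere_norm_le {f : ℂ → ℂ} {r M : ℝ} (hr : 0 ≤ r)
    (hM : ∀ z ∈ sphere (0:ℂ) r, ‖f z‖ ≤ M) : 0 ≤ M :=
  (norm_nonneg _).trans (hM r (by simp [abs_of_nonneg hr]))

lemma norm_coeff_mul_coeff_mul_pow_le {f g : ℂ → ℂ} {r₁ r₂ M₁ M₂ : ℝ} (hr₁ : 0 < r₁) (hr₂ : 0 < r₂)
    (hf : DifferentiableOn ℂ f (closedBall 0 r₁)) (hg : DifferentiableOn ℂ g (closedBall 0 r₂))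
    (hM₁ : ∀ w ∈ sphere (0:ℂ) r₁, ‖f w‖ ≤ M₁) (hM₂ : ∀ w ∈ sphere (0:ℂ) r₂, ‖g w‖ ≤ M₂)
    (z : ℂ) (k : ℕ) :
    ‖coeff f k * coeff g k * z ^ k‖ ≤ M₁ * M₂ * (‖z‖ / (r₁ * r₂)) ^ k := by
  have h₁ := norm_coeff_le hr₁ hf hM₁ k
  have h₂ := norm_coeff_le hr₂ hg hM₂ k
  calc ‖coeff f k * coeff g k * z ^ k‖ = ‖coeff f k‖ * ‖coeff g k‖ * ‖z‖ ^ k := by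
        simp only [norm_mul, norm_pow]
    _ ≤ M₁ / r₁ ^ k * (M₂ / r₂ ^ k) * ‖z‖ ^ k := by
        gcongr
        exact (norm_nonneg _).trans h₁
    _ = M₁ * M₂ * (‖z‖ / (r₁ * r₂)) ^ k := by
        rw [div_pow, mul_pow]
        field_simp

lemma summable_hadamard_series {f g : ℂ → ℂ} {r₁ r₂ : ℝ} (hr₁ : 0 < r₁) (hr₂ : 0 < r₂)
    (hf : DifferentiableOn ℂ f (closedBall 0 r₁)) (hg : DifferentiableOn ℂ g (closedBall 0 r₂))
    {z : ℂ} (hz : ‖z‖ < r₁ * r₂) :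
    Summable fun k => coeff f k * coeff g k * z ^ k := by
  obtain ⟨M₁, hM₁⟩ := (isCompact_sphere (0:ℂ) r₁).exists_bound_of_continuousOn
    (hf.continuousOn.mono sphere_subset_closedBall)
  obtain ⟨M₂, hM₂⟩ := (isCompact_sphere (0:ℂ) r₂).exists_bound_of_continuousOn
    (hg.continuousOn.mono sphere_subset_closedBall)
  have hq : ‖z‖ / (r₁ * r₂) < 1 := (div_lt_one (by positivity)).mpr hz
  exact .of_norm_bounded ((summable_geometric_of_lt_one (by positivity) hq).mul_left (M₁ * M₂))
    (norm_coeff_mul_coeff_mul_pow_le hr₁ hr₂ hf hg hM₁ hM₂ z)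

lemma norm_hadamard_le {f g : ℂ → ℂ} {r₁ r₂ M₁ M₂ : ℝ} (hr₁ : 0 < r₁) (hr₂ : 0 < r₂)
    (hf : DifferentiableOn ℂ f (closedBall 0 r₁)) (hg : DifferentiableOn ℂ g (closedBall 0 r₂))
    (hM₁ : ∀ w ∈ sphere (0:ℂ) r₁, ‖f w‖ ≤ M₁) (hM₂ : ∀ w ∈ sphere (0:ℂ) r₂, ‖g w‖ ≤ M₂)
    {z : ℂ} (hz : ‖z‖ < r₁ * r₂) :
    ‖hadamard f g z‖ ≤ M₁ * M₂ / (1 - ‖z‖ / (r₁ * r₂)) := by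
  have hq : ‖z‖ / (r₁ * r₂) < 1 := (div_lt_one (by positivity)).mpr hz
  rw [div_eq_mul_inv]
  exact tsum_of_norm_bounded ((hasSum_geometric_of_lt_one (by positivity) hq).mul_left (M₁ * M₂))
    (norm_coeff_mul_coeff_mul_pow_le hr₁ hr₂ hf hg hM₁ hM₂ z)

lemma hadamard_sub_left {f₁ f₂ g : ℂ → ℂ} {r₁ r₂ : ℝ} (hr₁ : 0 < r₁) (hr₂ : 0 < r₂)
    (hf₁ : DifferentiableOn ℂ f₁ (closedBall 0 r₁)) (hf₂ : DifferentiableOn ℂ f₂ (closedBall 0 r₁))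
    (hg : DifferentiableOn ℂ g (closedBall 0 r₂)) {z : ℂ} (hz : ‖z‖ < r₁ * r₂) :
    hadamard (f₁ - f₂) g z = hadamard f₁ g z - hadamard f₂ g z := by
  have h0 : closedBall (0:ℂ) r₁ ∈ 𝓝 0 := closedBall_mem_nhds 0 hr₁
  rw [hadamard, hadamard, hadamard, ← (summable_hadamard_series hr₁ hr₂ hf₁ hg hz).tsum_sub
    (summable_hadamard_series hr₁ hr₂ hf₂ hg hz)]
  congr 1 with k
  rw [coeff_sub (hf₁.analyticAt h0) (hf₂.analyticAt h0)]
  ring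

lemma exists_pos_lt_of_lt_mul {ρ R₁ R₂ : ℝ} (hR₁ : 0 < R₁) (hR₂ : 0 < R₂) (hρ : ρ < R₁ * R₂) :
    ∃ r₁ ∈ Ioo 0 R₁, ∃ r₂ ∈ Ioo 0 R₂, ρ < r₁ * r₂ := by
  obtain ⟨r₂, hr₂, hr₂R⟩ := exists_between (max_lt (by rwa [div_lt_iff₀' hR₁]) hR₂ :
    max (ρ / R₁) 0 < R₂)
  have hr₂0 : 0 < r₂ := (le_max_right _ _).trans_lt hr₂
  have hρr₂ : ρ < R₁ * r₂ := by rw [← div_lt_iff₀' hR₁]; exact (le_max_left _ _).trans_lt hr₂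
  obtain ⟨r₁, hr₁, hr₁R⟩ := exists_between (max_lt (by rwa [div_lt_iff₀ hr₂0]) hR₁ :
    max (ρ / r₂) 0 < R₁)
  refine ⟨r₁, ⟨(le_max_right _ _).trans_lt hr₁, hr₁R⟩, r₂, ⟨hr₂0, hr₂R⟩, ?_⟩
  rw [← div_lt_iff₀ hr₂0]
  exact (le_max_left _ _).trans_lt hr₁

lemma exists_forall_norm_hadamard_sub_le {R₁ R₂ : ℝ} (hR₁ : 0 < R₁) (hR₂ : 0 < R₂) {g : ℂ → ℂ}
    (hg : AnalyticOnNhd ℂ g (ball (0:ℂ) R₂)) {K : Set ℂ} (hK : K ∈ S (R₁ * R₂)) :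
    ∃ r₁ < R₁, ∃ C ≥ 0, ∀ f₁ f₂ : ℂ → ℂ, AnalyticOnNhd ℂ f₁ (ball (0:ℂ) R₁) →
      AnalyticOnNhd ℂ f₂ (ball (0:ℂ) R₁) → ∀ δ, (∀ w ∈ sphere (0:ℂ) r₁, ‖f₁ w - f₂ w‖ ≤ δ) →
      ∀ z ∈ K, ‖hadamard f₁ g z - hadamard f₂ g z‖ ≤ C * δ := by
  obtain ⟨ρ, hρ, hKρ⟩ := exists_lt_subset_ball hK.2.isClosed hK.1
  obtain ⟨r₁, ⟨hr₁, hr₁R⟩, r₂, ⟨hr₂, hr₂R⟩, hρr⟩ := exists_pos_lt_of_lt_mul hR₁ hR₂ hρ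
  have hgd : DifferentiableOn ℂ g (closedBall 0 r₂) :=
    (hg.mono (closedBall_subset_ball hr₂R)).differentiableOn
  obtain ⟨M, hM⟩ := (isCompact_sphere (0:ℂ) r₂).exists_bound_of_continuousOn
    (hgd.continuousOn.mono sphere_subset_closedBall)
  have hq : ρ / (r₁ * r₂) < 1 := (div_lt_one (by positivity)).mpr hρr
  have hM0 := nonneg_of_forall_mem_sphere_norm_le hr₂.le hM
  refine ⟨r₁, hr₁R, M / (1 - ρ / (r₁ * r₂)), div_nonneg hM0 (by linarith), ?_⟩
  intro f₁ f₂ hf₁ hf₂ δ hδ z hz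
  have hd {f : ℂ → ℂ} (hf : AnalyticOnNhd ℂ f (ball (0:ℂ) R₁)) :
      DifferentiableOn ℂ f (closedBall 0 r₁) :=
    (hf.mono (closedBall_subset_ball hr₁R)).differentiableOn
  have hzρ : ‖z‖ < ρ := by simpa using hKρ hz
  have hzr : ‖z‖ < r₁ * r₂ := hzρ.trans hρr
  have hδ0 := nonneg_of_forall_mem_sphere_norm_le hr₁.le hδ
  rw [← hadamard_sub_left hr₁ hr₂ (hd hf₁) (hd hf₂) hgd hzr]
  calc ‖hadamard (f₁ - f₂) g z‖ ≤ δ * M / (1 - ‖z‖ / (r₁ * r₂)) :=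
        norm_hadamard_le hr₁ hr₂ ((hd hf₁).sub (hd hf₂)) hgd hδ hM hzr
    _ ≤ δ * M / (1 - ρ / (r₁ * r₂)) := by gcongr
    _ = M / (1 - ρ / (r₁ * r₂)) * δ := by ring

lemma continuousOn_hadamard_left {R₁ R₂ : ℝ} (hR₁ : 0 < R₁) (hR₂ : 0 < R₂) {g : ℂ → ℂ}
    (hg : AnalyticOnNhd ℂ g (ball (0:ℂ) R₂)) :
    ContinuousOn
      (fun F => UniformOnFun.ofFun (S (R₁ * R₂)) (hadamard (UniformOnFun.toFun (S R₁) F) g))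
      (UniformOnFun.ofFun (S R₁) '' {f | AnalyticOnNhd ℂ f (ball (0:ℂ) R₁)}) := by
  rintro _ ⟨f₀, hf₀, rfl⟩
  rw [ContinuousWithinAt, UniformOnFun.tendsto_iff_tendstoUniformlyOn]
  intro K hK
  obtain ⟨r₁, hr₁, C, hC, hbound⟩ := exists_forall_norm_hadamard_sub_le hR₁ hR₂ hg hK
  have hconv := UniformOnFun.tendsto_iff_tendstoUniformlyOn.mp
    (tendsto_id (x := 𝓝 (UniformOnFun.ofFun (S R₁) f₀))) (closedBall (0:ℂ) r₁)
    ⟨closedBall_subset_ball hr₁, isCompact_closedBall 0 r₁⟩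
  rw [Metric.tendstoUniformlyOn_iff] at hconv ⊢
  intro ε hε
  filter_upwards [nhdsWithin_le_nhds (hconv (ε / (C + 1)) (by positivity)), self_mem_nhdsWithin]
    with _ hF hFs z hz
  obtain ⟨f, hf, rfl⟩ := hFs
  calc dist (hadamard f₀ g z) (hadamard f g z) ≤ C * (ε / (C + 1)) := by
        rw [dist_eq_norm]
        refine hbound f₀ f hf₀ hf _ (fun w hw => ?_) z hz
        simpa [dist_eq_norm] using (hF w (sphere_subset_closedBall hw)).le
    _ < ε := by
        rw [mul_div_assoc', div_lt_iff₀ (by positivity)]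
        nlinarith

theorem stmt3 (R₁ R₂ : ℝ) (hR₁ : 0 < R₁) (hR₂ : 0 < R₂)
    (V : Set (ℂ → ℂ)) (hV : ∀ f ∈ V, AnalyticOnNhd ℂ f (ball (0:ℂ) R₁))
    (hc : IsCompact ((UniformOnFun.ofFun (S R₁)) '' V))
    (g : ℂ → ℂ) (hg : AnalyticOnNhd ℂ g (ball (0:ℂ) R₂)) :
    IsCompact ((UniformOnFun.ofFun (S (R₁ * R₂))) '' ((fun f => hadamard f g) '' V)) := by
  have himage : (UniformOnFun.ofFun (S (R₁ * R₂))) '' ((fun f => hadamard f g) '' V) =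
      (fun F => UniformOnFun.ofFun (S (R₁ * R₂)) (hadamard (UniformOnFun.toFun (S R₁) F) g)) ''
        ((UniformOnFun.ofFun (S R₁)) '' V) := by
    simp only [image_image]
    rfl
  rw [himage]
  exact hc.image_of_continuousOn ((continuousOn_hadamard_left hR₁ hR₂ hg).mono (image_mono hV))
end

section
/- Let V be a compact set of functions analytic on D(0,R) with R > 1, such that f(1) ≠ 0 for every f ∈ V. Then there exists σ ∈ (1,R) such that f(σ) ≠ 0 for all f ∈ V. -/
open Metric Set Filter

open Topology

/-- The evaluation map is jointly continuous at `(f, x)` when `f` is continuous at `x`, so the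
tube lemma over the compact family gives a single neighbourhood of `x` that works for all `f`. -/
theorem UniformOnFun.eventually_forall_mem_of_isCompact {α β : Type*} [TopologicalSpace α]
    [UniformSpace β] {𝔖 : Set (Set α)} {V : Set (α → β)} (hV : IsCompact (ofFun 𝔖 '' V))
    {x : α} (h𝔖 : ∃ K ∈ 𝔖, K ∈ 𝓝 x) (hcont : ∀ f ∈ V, ContinuousAt f x)
    {U : Set β} (hU : IsOpen U) (hxU : ∀ f ∈ V, f x ∈ U) :
    ∀ᶠ y in 𝓝 x, ∀ f ∈ V, f y ∈ U := by
  have hP : ∀ F ∈ ofFun 𝔖 '' V, ∀ᶠ p : α × UniformOnFun α β 𝔖 in 𝓝 (x, F), toFun 𝔖 p.2 p.1 ∈ U := by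
    rintro _ ⟨f, hf, rfl⟩
    have heval := (UniformOnFun.continuousAt_eval₂ (f := ofFun 𝔖 f) h𝔖 (hcont f hf)).comp
      (x := (x, ofFun 𝔖 f)) continuous_swap.continuousAt
    exact heval.eventually_mem (hU.mem_nhds (hxU f hf))
  filter_upwards [hV.eventually_forall_of_forall_eventually (P := fun y F => toFun 𝔖 F y ∈ U) hP]
    with y hy f hf using hy _ (mem_image_of_mem _ hf)

theorem exists_mem_S_mem_nhds {R : ℝ} {z : ℂ} (hz : z ∈ ball (0 : ℂ) R) :
    ∃ K ∈ S R, K ∈ 𝓝 z := by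
  obtain ⟨K, hKz, hKR, hK⟩ := local_compact_nhds (isOpen_ball.mem_nhds hz)
  exact ⟨K, ⟨hKR, hK⟩, hKz⟩

theorem stmt4 (R : ℝ) (hR : 1 < R)
    (V : Set (ℂ → ℂ)) (hV : ∀ f ∈ V, AnalyticOnNhd ℂ f (ball (0:ℂ) R))
    (hc : IsCompact ((UniformOnFun.ofFun (S R)) '' V))
    (hnz : ∀ f ∈ V, f 1 ≠ 0) :
    ∃ σ : ℝ, σ ∈ Ioo 1 R ∧ ∀ f ∈ V, f (σ : ℂ) ≠ 0 := by
  have h1 : (1 : ℂ) ∈ ball (0 : ℂ) R := by simpa using hR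
  have hnear : ∀ᶠ z in 𝓝 (1 : ℂ), ∀ f ∈ V, f z ∈ ({0}ᶜ : Set ℂ) :=
    UniformOnFun.eventually_forall_mem_of_isCompact hc (exists_mem_S_mem_nhds h1)
      (fun f hf => (hV f hf 1 h1).continuousAt) isOpen_compl_singleton hnz
  have hreal : ∀ᶠ σ : ℝ in 𝓝[>] 1, ∀ f ∈ V, f (σ : ℂ) ≠ 0 :=
    nhdsWithin_le_nhds (Complex.continuous_ofReal.tendsto' 1 1 (by simp) hnear)
  exact (Eventually.and (Ioo_mem_nhdsGT hR) hreal).exists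
end

section
/- Let V ⊆ U ⊆ A₀, and suppose that for every continuous linear functional λ on A (represented as λ(f) = (f*g)(1) for some g analytic on the closed unit disk), the value g(0) lies in λ(V). Then the following are equivalent: (a) λ(U) = λ(V) for all such λ; (b) for all such λ, 0 ∉ λ(V) implies 0 ∉ λ(U); (c) U^T = V^T. -/
open Metric Set Filter

/-! For `f ∈ A₀` the functional `λ_g(f) = (f * g)(1)` is affine in `g`: replacing `g` by `g - c`
shifts it by `-c` (the constant Taylor coefficient of `f` is `1`), and replacing `g` by `c • g`
scales it by `c`. Shifting turns "`c` is a value of `λ_g`" into "`0` is a value of `λ_{g - c}`",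
which gives (b) ⇒ (a). If `0 ∉ λ_g(V)` then `g 0 ∈ λ_g(V)` is nonzero, so `g / g 0` lies in `V^T`,
which gives (c) ⇒ (b). The series defining `λ_g(f)` converges absolutely because the Taylor
coefficients of `f` and `g` are `O(ρ⁻ᵏ)` and `O(r⁻ᵏ)` for some `ρ < 1 < r` with `ρ r > 1`. -/

section Coefficients

variable {f g : ℂ → ℂ}

lemma coeff_zero (f : ℂ → ℂ) : coeff f 0 = f 0 := by
  simp [coeff]

lemma hasSum_coeff_mul_pow {R : ℝ} (hf : DifferentiableOn ℂ f (ball 0 R)) {z : ℂ}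
    (hz : z ∈ ball (0 : ℂ) R) : HasSum (fun k => coeff f k * z ^ k) (f z) := by
  have hterm : ∀ k, coeff f k * z ^ k = (k.factorial : ℂ)⁻¹ • (z - 0) ^ k • iteratedDeriv k f 0 :=
    fun k => by rw [coeff, sub_zero, smul_eq_mul, smul_eq_mul]; ring
  simpa only [hterm] using Complex.hasSum_taylorSeries_on_ball hf hz

lemma exists_norm_coeff_mul_pow_le {R r : ℝ} (hf : DifferentiableOn ℂ f (ball 0 R))
    (hr : 0 ≤ r) (hrR : r < R) : ∃ C, ∀ k, ‖coeff f k‖ * r ^ k ≤ C := by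
  have hsum := hasSum_coeff_mul_pow hf (z := r) (by simpa [abs_of_nonneg hr] using hrR)
  obtain ⟨C, hC⟩ := hsum.summable.tendsto_atTop_zero.norm.bddAbove_range
  exact ⟨C, fun k => by simpa [Complex.norm_real, abs_of_nonneg hr] using hC ⟨k, rfl⟩⟩

lemma summable_of_norm_mul_pow_le {a : ℕ → ℂ} {t C : ℝ} (ht : 1 < t)
    (h : ∀ k, ‖a k‖ * t ^ k ≤ C) : Summable a := by
  have ht0 : 0 < t := by linarith
  refine Summable.of_norm_bounded (g := fun k => C * t⁻¹ ^ k)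
    ((summable_geometric_of_lt_one (by positivity) (inv_lt_one_of_one_lt₀ ht)).mul_left C)
    fun k => ?_
  rw [inv_pow, ← div_eq_mul_inv, le_div_iff₀ (by positivity)]
  exact h k

lemma summable_coeff_mul_coeff {R : ℝ} (hf : DifferentiableOn ℂ f (ball 0 1)) (hR : 1 < R)
    (hg : DifferentiableOn ℂ g (ball 0 R)) :
    Summable fun k => coeff f k * coeff g k := by
  obtain ⟨r, hr1, hrR⟩ := exists_between hR
  obtain ⟨ρ, hρr, hρ1⟩ := exists_between (inv_lt_one_of_one_lt₀ hr1)
  have hr0 : 0 < r := by linarith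
  have hρ0 : 0 < ρ := (inv_pos.mpr hr0).trans hρr
  obtain ⟨C₁, hC₁⟩ := exists_norm_coeff_mul_pow_le hf hρ0.le hρ1
  obtain ⟨C₂, hC₂⟩ := exists_norm_coeff_mul_pow_le hg hr0.le hrR
  refine summable_of_norm_mul_pow_le (t := ρ * r) (C := C₁ * C₂)
    (by simpa [inv_mul_cancel₀ hr0.ne'] using mul_lt_mul_of_pos_right hρr hr0) fun k => ?_
  calc ‖coeff f k * coeff g k‖ * (ρ * r) ^ k
      = (‖coeff f k‖ * ρ ^ k) * (‖coeff g k‖ * r ^ k) := by rw [norm_mul, mul_pow]; ring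
    _ ≤ C₁ * C₂ :=
      mul_le_mul (hC₁ k) (hC₂ k) (by positivity) ((by positivity : (0:ℝ) ≤ _).trans (hC₁ 0))

lemma coeff_sub_const (hg : AnalyticAt ℂ g 0) (c : ℂ) (k : ℕ) :
    coeff (fun z => g z - c) k = coeff g k - if k = 0 then c else 0 := by
  rcases k.eq_zero_or_pos with rfl | hk
  · simp [coeff_zero]
  · simp only [coeff, iteratedDeriv_fun_sub hg.contDiffAt contDiffAt_const, iteratedDeriv_const,
      if_neg hk.ne', sub_zero]

lemma coeff_const_mul (c : ℂ) (k : ℕ) :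
    coeff (fun z => c * g z) k = c * coeff g k := by
  simp only [coeff, iteratedDeriv_const_mul_field, mul_div_assoc]

end Coefficients

lemma eligible.sub_const {g : ℂ → ℂ} (hg : eligible g) (c : ℂ) : eligible fun z => g z - c := by
  obtain ⟨R, hR, hga⟩ := hg
  exact ⟨R, hR, hga.sub analyticOnNhd_const⟩

lemma eligible.const_mul {g : ℂ → ℂ} (hg : eligible g) (c : ℂ) : eligible fun z => c * g z := by
  obtain ⟨R, hR, hga⟩ := hg
  exact ⟨R, hR, analyticOnNhd_const.mul hga⟩

lemma hadamard_sub_const {f g : ℂ → ℂ} (hf : AnalyticOnNhd ℂ f (ball 0 1)) (hg : eligible g)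
    (c : ℂ) : hadamard f (fun z => g z - c) 1 = hadamard f g 1 - f 0 * c := by
  obtain ⟨R, hR, hga⟩ := hg
  have hsum := summable_coeff_mul_coeff hf.differentiableOn hR hga.differentiableOn
  simp only [hadamard, one_pow, mul_one, coeff_sub_const (hga 0 (mem_ball_self (by linarith))),
    mul_sub, mul_ite, mul_zero]
  rw [hsum.tsum_sub (summable_of_ne_finset_zero (s := {0}) (by simp_all)), tsum_ite_eq,
    coeff_zero]

lemma hadamard_const_mul (f g : ℂ → ℂ) (c z : ℂ) :
    hadamard f (fun z => c * g z) z = c * hadamard f g z := by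
  simp only [hadamard, coeff_const_mul, ← tsum_mul_left]
  congr 1 with k
  ring

section Functionals

variable {U V W : Set (ℂ → ℂ)} {g : ℂ → ℂ}

lemma zero_mem_lamSet_sub_const_iff (hW : W ⊆ A0) (hg : eligible g) (c : ℂ) :
    (0 : ℂ) ∈ lamSet (fun z => g z - c) W ↔ c ∈ lamSet g W := by
  refine exists_congr fun f => and_congr_right fun hf => ?_
  simp only [hadamard_sub_const (hW hf).1 hg, (hW hf).2, one_mul, sub_eq_zero]

lemma zero_mem_lamSet_const_mul_iff {c : ℂ} (hc : c ≠ 0) :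
    (0 : ℂ) ∈ lamSet (fun z => c * g z) W ↔ (0 : ℂ) ∈ lamSet g W := by
  simp only [lamSet, mem_image, hadamard_const_mul, mul_eq_zero, hc, false_or]

lemma mem_VT_iff : g ∈ VT W ↔ eligible g ∧ g 0 = 1 ∧ (0 : ℂ) ∉ lamSet g W := by
  simp [VT, lamSet]

lemma VT_anti (hVU : V ⊆ U) : VT U ⊆ VT V :=
  fun _ ⟨hg, hg0, hU⟩ => ⟨hg, hg0, fun f hf => hU f (hVU hf)⟩

lemma lamSet_eq_of_forall_zero_notMem (hVU : V ⊆ U) (hU : U ⊆ A0)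
    (hb : ∀ g, eligible g → (0 : ℂ) ∉ lamSet g V → (0 : ℂ) ∉ lamSet g U) (hg : eligible g) :
    lamSet g U = lamSet g V := by
  refine Subset.antisymm (fun c hc => ?_) (image_mono hVU)
  rw [← zero_mem_lamSet_sub_const_iff hU hg] at hc
  rw [← zero_mem_lamSet_sub_const_iff (hVU.trans hU) hg]
  by_contra h
  exact hb _ (hg.sub_const c) h hc

lemma VT_eq_of_forall_zero_notMem (hVU : V ⊆ U)
    (hb : ∀ g, eligible g → (0 : ℂ) ∉ lamSet g V → (0 : ℂ) ∉ lamSet g U) : VT U = VT V := by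
  refine Subset.antisymm (VT_anti hVU) fun g hg => ?_
  rw [mem_VT_iff] at hg ⊢
  exact ⟨hg.1, hg.2.1, hb g hg.1 hg.2.2⟩

lemma zero_notMem_lamSet_of_VT_eq (h0 : ∀ g, eligible g → g 0 ∈ lamSet g V)
    (hVT : VT U = VT V) (hg : eligible g) (hV : (0 : ℂ) ∉ lamSet g V) :
    (0 : ℂ) ∉ lamSet g U := by
  have hg0 : g 0 ≠ 0 := fun h => hV (h ▸ h0 g hg)
  have hmem : (fun z => (g 0)⁻¹ * g z) ∈ VT V := by
    rw [mem_VT_iff, zero_mem_lamSet_const_mul_iff (inv_ne_zero hg0)]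
    exact ⟨hg.const_mul _, inv_mul_cancel₀ hg0, hV⟩
  rw [← hVT, mem_VT_iff, zero_mem_lamSet_const_mul_iff (inv_ne_zero hg0)] at hmem
  exact hmem.2.2

end Functionals

theorem stmt11 (U V : Set (ℂ → ℂ)) (hVU : V ⊆ U) (hU : U ⊆ A0)
    (h0 : ∀ g : ℂ → ℂ, eligible g → g 0 ∈ lamSet g V) :
    ((∀ g : ℂ → ℂ, eligible g → lamSet g U = lamSet g V) ↔
      (∀ g : ℂ → ℂ, eligible g → (0:ℂ) ∉ lamSet g V → (0:ℂ) ∉ lamSet g U)) ∧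
    ((∀ g : ℂ → ℂ, eligible g → (0:ℂ) ∉ lamSet g V → (0:ℂ) ∉ lamSet g U) ↔
      VT U = VT V) :=
  ⟨⟨fun ha g hg => (ha g hg).symm ▸ id,
      fun hb _ => lamSet_eq_of_forall_zero_notMem hVU hU hb⟩,
    ⟨VT_eq_of_forall_zero_notMem hVU,
      fun hVT _ => zero_notMem_lamSet_of_VT_eq h0 hVT⟩⟩
end

section
/- Let V ⊆ A₀ be compact with V^T complete. Then V^T = ∪_{0<r<1} P_r(V^T) = ∪_{0<r<1} P_r([P_r(V)]^T). -/
open Metric Set Filter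

/-! Fix `g ∈ V^T`, analytic on a disk of radius `R > 1`. Cauchy estimates on a circle of
radius `ρ < 1` make every Taylor coefficient of `f` Lipschitz for uniform convergence on that
circle, so `(z, f) ↦ (f * g)(z)` is jointly continuous for `|z| < ρ R`. As `(f * g)(1) ≠ 0` on the
compact set `V`, the tube lemma gives `t > 1` with `(f * g)(t) ≠ 0` on `V`; then `P_t g ∈ V^T`
and `g = P_{1/t} (P_t g)`. The reverse inclusion is completeness of `V^T`. The second identity
is bookkeeping with `(P_x f * h)(z) = (f * P_x h)(z) = (f * h)(x z)`. -/

open Topology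
open scoped UniformConvergence

lemma coeff_sub_s17 {f g : ℂ → ℂ} (hf : AnalyticAt ℂ f 0) (hg : AnalyticAt ℂ g 0) (k : ℕ) :
    coeff (f - g) k = coeff f k - coeff g k := by
  rw [coeff, coeff, coeff, iteratedDeriv_sub hf.contDiffAt hg.contDiffAt, sub_div]

lemma iteratedDeriv_Pt_zero {f : ℂ → ℂ} (hf : AnalyticAt ℂ f 0) (x : ℂ) (k : ℕ) :
    iteratedDeriv k (Pt x f) 0 = x ^ k * iteratedDeriv k f 0 := by
  obtain ⟨r, hr, hfr⟩ := hf.exists_ball_analyticOnNhd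
  set L : ℂ →L[ℂ] ℂ := x • ContinuousLinearMap.id ℂ ℂ
  have hball : IsOpen (L ⁻¹' ball 0 r) := isOpen_ball.preimage L.continuous
  have h0 : L 0 ∈ ball (0 : ℂ) r := by simpa using hr
  have hcomp := L.iteratedFDerivWithin_comp_right (hfr.contDiffOn isOpen_ball.uniqueDiffOn (n := k))
    isOpen_ball.uniqueDiffOn hball.uniqueDiffOn h0 le_rfl
  rw [iteratedFDerivWithin_of_isOpen k hball h0, iteratedFDerivWithin_of_isOpen k isOpen_ball h0]
    at hcomp
  rw [iteratedDeriv_eq_iteratedFDeriv, iteratedDeriv_eq_iteratedFDeriv]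
  have hPt : Pt x f = f ∘ L := by ext z; simp [Pt, L]
  rw [hPt, hcomp]
  simpa [L] using (iteratedFDeriv ℂ k f 0).map_smul_univ (fun _ => x) (fun _ => 1)

lemma coeff_Pt {f : ℂ → ℂ} (hf : AnalyticAt ℂ f 0) (x : ℂ) (k : ℕ) :
    coeff (Pt x f) k = x ^ k * coeff f k := by
  rw [coeff, coeff, iteratedDeriv_Pt_zero hf, mul_div_assoc]

lemma norm_coeff_le_s17 {f : ℂ → ℂ} {ρ A : ℝ} (hρ : 0 < ρ) (hf : DiffContOnCl ℂ f (ball 0 ρ))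
    (hA : ∀ z ∈ sphere (0 : ℂ) ρ, ‖f z‖ ≤ A) (k : ℕ) : ‖coeff f k‖ ≤ A / ρ ^ k := by
  have hk : (0 : ℝ) < k.factorial := by positivity
  rw [coeff, norm_div, Complex.norm_natCast, div_le_iff₀ hk, div_mul_eq_mul_div, mul_comm A]
  exact Complex.norm_iteratedDeriv_le_of_forall_mem_sphere_norm_le k hρ hf hA

lemma exists_norm_coeff_le {f : ℂ → ℂ} {ρ : ℝ} (hρ : 0 < ρ)
    (hf : DifferentiableOn ℂ f (closedBall 0 ρ)) : ∃ A, ∀ k, ‖coeff f k‖ ≤ A / ρ ^ k := by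
  obtain ⟨A, hA⟩ := (isCompact_closedBall (0 : ℂ) ρ).exists_bound_of_continuousOn hf.continuousOn
  exact ⟨A, norm_coeff_le_s17 hρ (hf.diffContOnCl_ball subset_rfl)
    fun z hz => hA z (sphere_subset_closedBall hz)⟩

section PowerSeries

variable {a : ℕ → ℂ} {C r T : ℝ} {z : ℂ}

lemma norm_mul_pow_le (ha : ∀ k, ‖a k‖ ≤ C / r ^ k) (hz : ‖z‖ ≤ T) (k : ℕ) :
    ‖a k * z ^ k‖ ≤ C * (T / r) ^ k := by
  rw [norm_mul, norm_pow, div_pow, ← mul_div_assoc, ← div_mul_eq_mul_div]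
  exact mul_le_mul (ha k) (pow_le_pow_left₀ (norm_nonneg z) hz k) (by positivity)
    ((norm_nonneg _).trans (ha k))

lemma summable_div_pow (hr : 0 < r) (hT₀ : 0 ≤ T) (hT : T < r) :
    Summable fun k : ℕ => (T / r) ^ k :=
  summable_geometric_of_lt_one (div_nonneg hT₀ hr.le) ((div_lt_one hr).2 hT)

lemma summable_mul_pow (hr : 0 < r) (ha : ∀ k, ‖a k‖ ≤ C / r ^ k) (hz : ‖z‖ ≤ T) (hT : T < r) :
    Summable fun k => a k * z ^ k :=
  .of_norm_bounded ((summable_div_pow hr ((norm_nonneg z).trans hz) hT).mul_left C)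
    (norm_mul_pow_le ha hz)

lemma norm_tsum_mul_pow_le (hr : 0 < r) (ha : ∀ k, ‖a k‖ ≤ C / r ^ k) (hz : ‖z‖ ≤ T)
    (hT : T < r) : ‖∑' k, a k * z ^ k‖ ≤ C * (1 - T / r)⁻¹ := by
  have hT₀ : 0 ≤ T := (norm_nonneg z).trans hz
  calc ‖∑' k, a k * z ^ k‖ ≤ ∑' k, C * (T / r) ^ k :=
        tsum_of_norm_bounded ((summable_div_pow hr hT₀ hT).mul_left C).hasSum
          (norm_mul_pow_le ha hz)
    _ = C * (1 - T / r)⁻¹ := by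
        rw [tsum_mul_left, tsum_geometric_of_lt_one (div_nonneg hT₀ hr.le) ((div_lt_one hr).2 hT)]

lemma continuousOn_tsum_mul_pow (hr : 0 < r) (ha : ∀ k, ‖a k‖ ≤ C / r ^ k) (hT₀ : 0 ≤ T)
    (hT : T < r) : ContinuousOn (fun z => ∑' k, a k * z ^ k) (closedBall 0 T) :=
  continuousOn_tsum (fun k => (continuous_const.mul (continuous_pow k)).continuousOn)
    ((summable_div_pow hr hT₀ hT).mul_left C)
    fun k _ hz => norm_mul_pow_le ha (mem_closedBall_zero_iff.1 hz) k

end PowerSeries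

section Hadamard

variable {f f₁ f₂ g : ℂ → ℂ} {z : ℂ}

lemma norm_coeff_mul_coeff_le {A B ρ s : ℝ} (hf : ∀ k, ‖coeff f k‖ ≤ A / ρ ^ k)
    (hg : ∀ k, ‖coeff g k‖ ≤ B / s ^ k) (k : ℕ) :
    ‖coeff f k * coeff g k‖ ≤ A * B / (ρ * s) ^ k := by
  rw [norm_mul, mul_pow, ← div_mul_div_comm]
  exact mul_le_mul (hf k) (hg k) (norm_nonneg _) ((norm_nonneg _).trans (hf k))

lemma hadamard_Pt_left (hf : AnalyticAt ℂ f 0) (x z : ℂ) :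
    hadamard (Pt x f) g z = hadamard f g (x * z) :=
  tsum_congr fun k => by rw [coeff_Pt hf, mul_pow]; ring

lemma hadamard_Pt_right (hg : AnalyticAt ℂ g 0) (x z : ℂ) :
    hadamard f (Pt x g) z = hadamard f g (x * z) :=
  tsum_congr fun k => by rw [coeff_Pt hg, mul_pow]; ring

lemma hadamard_sub_left_s17 (hf₁ : AnalyticAt ℂ f₁ 0) (hf₂ : AnalyticAt ℂ f₂ 0)
    (h₁ : Summable fun k => coeff f₁ k * coeff g k * z ^ k)
    (h₂ : Summable fun k => coeff f₂ k * coeff g k * z ^ k) :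
    hadamard (f₁ - f₂) g z = hadamard f₁ g z - hadamard f₂ g z := by
  rw [hadamard, hadamard, hadamard, ← h₁.tsum_sub h₂]
  exact tsum_congr fun k => by rw [coeff_sub_s17 hf₁ hf₂]; ring

lemma norm_hadamard_sub_le {ρ s T η B : ℝ} (hρ : 0 < ρ) (hs : 0 < s) (hT : T < ρ * s)
    (hf₁ : DifferentiableOn ℂ f₁ (closedBall 0 ρ)) (hf₂ : DifferentiableOn ℂ f₂ (closedBall 0 ρ))
    (hη : ∀ w ∈ sphere (0 : ℂ) ρ, ‖f₁ w - f₂ w‖ ≤ η) (hg : ∀ k, ‖coeff g k‖ ≤ B / s ^ k)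
    (hz : ‖z‖ ≤ T) :
    ‖hadamard f₁ g z - hadamard f₂ g z‖ ≤ η * B * (1 - T / (ρ * s))⁻¹ := by
  have hρs : 0 < ρ * s := mul_pos hρ hs
  have hsummable : ∀ {f}, DifferentiableOn ℂ f (closedBall 0 ρ) →
      Summable fun k => coeff f k * coeff g k * z ^ k := fun hf => by
    obtain ⟨A, hA⟩ := exists_norm_coeff_le hρ hf
    exact summable_mul_pow hρs (norm_coeff_mul_coeff_le hA hg) hz hT
  have hball := closedBall_mem_nhds (0 : ℂ) hρ
  rw [← hadamard_sub_left_s17 (hf₁.analyticAt hball) (hf₂.analyticAt hball) (hsummable hf₁)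
    (hsummable hf₂)]
  have hcoeff := norm_coeff_le_s17 hρ ((hf₁.sub hf₂).diffContOnCl_ball subset_rfl) hη
  exact norm_tsum_mul_pow_le hρs (norm_coeff_mul_coeff_le hcoeff hg) hz hT

lemma continuousOn_hadamard {A B ρ s T : ℝ} (hρ : 0 < ρ) (hs : 0 < s)
    (hf : ∀ k, ‖coeff f k‖ ≤ A / ρ ^ k) (hg : ∀ k, ‖coeff g k‖ ≤ B / s ^ k) (hT₀ : 0 ≤ T)
    (hT : T < ρ * s) : ContinuousOn (hadamard f g) (closedBall 0 T) :=
  continuousOn_tsum_mul_pow (mul_pos hρ hs) (norm_coeff_mul_coeff_le hf hg) hT₀ hT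

end Hadamard

lemma continuousOn_hadamard_uncurry {𝔖 : Set (Set ℂ)} {g : ℂ → ℂ} {ρ s T : ℝ} (hρ : 0 < ρ)
    (h𝔖 : sphere (0 : ℂ) ρ ∈ 𝔖) (hs : 0 < s) (hg : DifferentiableOn ℂ g (closedBall 0 s))
    (hT₀ : 0 ≤ T) (hT : T < ρ * s) :
    ContinuousOn (fun p : ℂ × (ℂ →ᵤ[𝔖] ℂ) => hadamard (UniformOnFun.toFun 𝔖 p.2) g p.1)
      (closedBall 0 T ×ˢ
        (UniformOnFun.ofFun 𝔖 '' {f | DifferentiableOn ℂ f (closedBall 0 ρ)})) := by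
  rintro ⟨z₀, _⟩ ⟨hz₀, f₀, hf₀, rfl⟩
  obtain ⟨A, hA⟩ := exists_norm_coeff_le hρ hf₀
  obtain ⟨B, hB⟩ := exists_norm_coeff_le hs hg
  set M := B * (1 - T / (ρ * s))⁻¹
  have hM : 0 ≤ M := mul_nonneg ((norm_nonneg _).trans (by simpa using hB 0))
    (inv_nonneg.2 (sub_nonneg.2 ((div_le_one (mul_pos hρ hs)).2 hT.le)))
  rw [ContinuousWithinAt, nhdsWithin_prod_eq, Metric.tendsto_nhds]
  intro ε hε
  set η := ε / (2 * (M + 1))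
  have hη : η * M < ε / 2 := by
    rw [div_mul_eq_mul_div, div_lt_div_iff₀ (by positivity) two_pos]
    nlinarith
  have h_near_z : ∀ᶠ z in 𝓝[closedBall 0 T] z₀,
      dist (hadamard f₀ g z) (hadamard f₀ g z₀) < ε / 2 :=
    Metric.tendsto_nhds.1 (continuousOn_hadamard hρ hs hA hB hT₀ hT z₀ hz₀) _ (half_pos hε)
  have h_near_f : ∀ᶠ φ in 𝓝 (UniformOnFun.ofFun 𝔖 f₀),
      ∀ w ∈ sphere (0 : ℂ) ρ, dist (f₀ w) (UniformOnFun.toFun 𝔖 φ w) < η :=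
    UniformOnFun.gen_mem_nhds ℂ 𝔖 _ h𝔖 (Metric.dist_mem_uniformity (by positivity))
  filter_upwards [(h_near_z.and self_mem_nhdsWithin).prod_mk
    ((h_near_f.filter_mono nhdsWithin_le_nhds).and self_mem_nhdsWithin)]
  rintro ⟨z, _⟩ ⟨⟨hz, hzT⟩, hclose, f, hf, rfl⟩
  simp only [UniformOnFun.toFun_ofFun] at hclose ⊢
  have hdiff := norm_hadamard_sub_le hρ hs hT hf hf₀
    (fun w hw => by rw [← dist_eq_norm, dist_comm]; exact (hclose w hw).le) hB
    (mem_closedBall_zero_iff.1 hzT)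
  calc dist (hadamard f g z) (hadamard f₀ g z₀)
      ≤ dist (hadamard f g z) (hadamard f₀ g z) + dist (hadamard f₀ g z) (hadamard f₀ g z₀) :=
        dist_triangle _ _ _
    _ < ε / 2 + ε / 2 := by
        rw [dist_eq_norm]
        gcongr
        linarith
    _ = ε := add_halves ε

lemma exists_one_lt_forall_hadamard_ne_zero {V : Set (ℂ → ℂ)} {g : ℂ → ℂ} {R : ℝ}
    (hV : ∀ f ∈ V, DifferentiableOn ℂ f (ball 0 1))
    (hc : IsCompact (UniformOnFun.ofFun (S 1) '' V)) (hR : 1 < R)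
    (hg : DifferentiableOn ℂ g (ball 0 R)) (hgV : ∀ f ∈ V, hadamard f g 1 ≠ 0) :
    ∃ t : ℝ, 1 < t ∧ t < R ∧ ∀ f ∈ V, hadamard f g t ≠ 0 := by
  obtain ⟨s, hs1, hsR⟩ := exists_between hR
  obtain ⟨ρ, hρs, hρ1⟩ := exists_between (inv_lt_one_of_one_lt₀ hs1)
  have hs : 0 < s := one_pos.trans hs1
  have hρ : 0 < ρ := (inv_pos.2 hs).trans hρs
  obtain ⟨T, hT1, hTρs⟩ := exists_between ((inv_lt_iff_one_lt_mul₀ hs).1 hρs)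
  set L := UniformOnFun.ofFun (S 1) '' {f : ℂ → ℂ | DifferentiableOn ℂ f (closedBall 0 ρ)}
  have hsphere : sphere (0 : ℂ) ρ ∈ S 1 :=
    ⟨sphere_subset_closedBall.trans (closedBall_subset_ball hρ1), isCompact_sphere _ _⟩
  have hcont := continuousOn_hadamard_uncurry hρ hsphere hs (hg.mono (closedBall_subset_ball hsR))
    (by linarith) hTρs
  have hVL : UniformOnFun.ofFun (S 1) '' V ⊆ L :=
    image_mono fun f hf => (hV f hf).mono (closedBall_subset_ball hρ1)
  have h_near_one : ∀ᶠ z in 𝓝 (1 : ℂ), ∀ φ ∈ UniformOnFun.ofFun (S 1) '' V,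
      (z, φ) ∈ closedBall 0 T ×ˢ L → hadamard (UniformOnFun.toFun (S 1) φ) g z ≠ 0 := by
    refine hc.eventually_forall_of_forall_eventually ?_
    rintro _ ⟨f, hf, rfl⟩
    have hmem : ((1 : ℂ), UniformOnFun.ofFun (S 1) f) ∈ closedBall 0 T ×ˢ L :=
      ⟨by simpa using hT1.le, hVL ⟨f, hf, rfl⟩⟩
    exact eventually_nhdsWithin_iff.1 ((hcont _ hmem).eventually_ne (by simpa using hgV f hf))
  have h_real : Tendsto (fun t : ℝ => (t : ℂ)) (𝓝[>] (1 : ℝ)) (𝓝 1) :=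
    (Complex.continuous_ofReal.tendsto' 1 1 Complex.ofReal_one).mono_left nhdsWithin_le_nhds
  obtain ⟨t, ht, ht1, htT⟩ := ((h_real.eventually h_near_one).and (Ioo_mem_nhdsGT hT1)).exists
  have htT' : (t : ℂ) ∈ closedBall 0 T := by
    simpa [abs_of_pos (one_pos.trans ht1)] using htT.le
  refine ⟨t, ht1, by linarith [hTρs, mul_lt_of_lt_one_left hs hρ1], fun f hf => ?_⟩
  simpa using ht _ ⟨f, hf, rfl⟩ ⟨htT', hVL ⟨f, hf, rfl⟩⟩

lemma Pt_Pt (x y : ℂ) (f : ℂ → ℂ) : Pt x (Pt y f) = Pt (y * x) f :=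
  funext fun z => by simp only [Pt, mul_assoc]

lemma Pt_one (f : ℂ → ℂ) : Pt 1 f = f :=
  funext fun z => by simp only [Pt, one_mul]

lemma eligible_Pt {g : ℂ → ℂ} {R : ℝ} {x : ℂ} (hR : 1 < R)
    (hg : AnalyticOnNhd ℂ g (ball 0 R)) (hx : ‖x‖ < R) : eligible (Pt x g) := by
  set m := max ‖x‖ 1
  have hm : 0 < m := one_pos.trans_le (le_max_right _ _)
  refine ⟨R / m, (one_lt_div hm).2 (max_lt hx hR),
    hg.comp (analyticOnNhd_const.mul analyticOnNhd_id) fun z hz => ?_⟩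
  rw [mem_ball_zero_iff, lt_div_iff₀ hm] at hz
  rw [mem_ball_zero_iff]
  calc ‖x * z‖ = ‖x‖ * ‖z‖ := norm_mul _ _
    _ ≤ ‖z‖ * m := by rw [mul_comm]; gcongr; exact le_max_left _ _
    _ < R := hz

lemma Pt_mem_VT {W : Set (ℂ → ℂ)} {g : ℂ → ℂ} {R : ℝ} {x : ℂ} (hR : 1 < R)
    (hg : AnalyticOnNhd ℂ g (ball 0 R)) (hx : ‖x‖ < R) (hg0 : g 0 = 1)
    (hW : ∀ f ∈ W, hadamard f g x ≠ 0) : Pt x g ∈ VT W := by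
  refine ⟨eligible_Pt hR hg hx, by simpa [Pt] using hg0, fun f hf => ?_⟩
  rw [hadamard_Pt_right (hg 0 (mem_ball_self (one_pos.trans hR))), mul_one]
  exact hW f hf

lemma mem_iUnion_Pt_image {W : ℝ → Set (ℂ → ℂ)} {g : ℂ → ℂ} {t : ℝ} (ht : 1 < t)
    (h : Pt (t : ℂ) g ∈ W t⁻¹) : g ∈ ⋃ r ∈ Ioo (0 : ℝ) 1, Pt (r : ℂ) '' W r := by
  refine mem_iUnion₂.2 ⟨t⁻¹, ⟨inv_pos.2 (one_pos.trans ht), inv_lt_one_of_one_lt₀ ht⟩, _, h, ?_⟩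
  have ht0 : (t : ℂ) ≠ 0 := Complex.ofReal_ne_zero.2 (one_pos.trans ht).ne'
  rw [Pt_Pt, Complex.ofReal_inv, mul_inv_cancel₀ ht0, Pt_one]

theorem stmt17 (V : Set (ℂ → ℂ)) (hV : V ⊆ A0)
    (hc : IsCompact ((UniformOnFun.ofFun (S 1)) '' V))
    (hcomplete : ∀ g ∈ VT V, ∀ x : ℂ, ‖x‖ ≤ 1 → Pt x g ∈ VT V) :
    VT V = ⋃ r ∈ Ioo (0:ℝ) 1, Pt (r:ℂ) '' (VT V) ∧
    VT V = ⋃ r ∈ Ioo (0:ℝ) 1, Pt (r:ℂ) '' (VT (Pt (r:ℂ) '' V)) := by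
  have hVa : ∀ f ∈ V, AnalyticAt ℂ f 0 := fun f hf => (hV hf).1 0 (mem_ball_self one_pos)
  refine ⟨Subset.antisymm (fun g hg => ?_) (iUnion₂_subset fun r hr => ?_),
    Subset.antisymm (fun g hg => ?_) (iUnion₂_subset fun r hr => ?_)⟩
  · obtain ⟨⟨R, hR, hga⟩, hg0, hgV⟩ := hg
    obtain ⟨t, ht1, htR, ht⟩ := exists_one_lt_forall_hadamard_ne_zero
      (fun f hf => (hV hf).1.differentiableOn) hc hR hga.differentiableOn hgV
    exact mem_iUnion_Pt_image (W := fun _ => VT V) ht1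
      (Pt_mem_VT hR hga (by simpa [abs_of_pos (one_pos.trans ht1)] using htR) hg0 ht)
  · rintro _ ⟨h, hh, rfl⟩
    exact hcomplete h hh r (by simpa [abs_of_pos hr.1] using hr.2.le)
  · obtain ⟨⟨R, hR, hga⟩, hg0, hgV⟩ := hg
    obtain ⟨t, ht1, htR⟩ := exists_between hR
    have ht0 : (t : ℂ) ≠ 0 := Complex.ofReal_ne_zero.2 (one_pos.trans ht1).ne'
    refine mem_iUnion_Pt_image (W := fun r => VT (Pt (r : ℂ) '' V)) ht1
      (Pt_mem_VT hR hga (by simpa [abs_of_pos (one_pos.trans ht1)] using htR) hg0 ?_)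
    rintro _ ⟨f, hf, rfl⟩
    rw [hadamard_Pt_left (hVa f hf), Complex.ofReal_inv, inv_mul_cancel₀ ht0]
    exact hgV f hf
  · rintro _ ⟨h, ⟨⟨R, hR, hha⟩, hh0, hhV⟩, rfl⟩
    refine Pt_mem_VT hR hha (by simpa [abs_of_pos hr.1] using hr.2.trans hR) hh0 fun f hf => ?_
    rw [← mul_one (r : ℂ), ← hadamard_Pt_left (hVa f hf)]
    exact hhV _ ⟨f, hf, rfl⟩
end
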